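/- arXiv:2405.20368 — 4 statements merged into one kernel-verified Lean document; each statement's English description precedes it below -/
import Mathlib

section
/- For every λ > 0, the pair (1 − 1/(q−1), λ) is not in the unique regime; that is, sup_{d≥0} limsup_{n→∞} f_{1−1/(q−1),λ,d}(n) > 1. -/
open scoped Classical

/-- The normalized second eigenvalue of a `d`-regular graph `G`, defined via the
Courant–Fischer characterization (the supremum of Rayleigh quotients over nonzero
vectors orthogonal to the all-ones vector).  By convention, a `0`-regular
(empty) graph has normalized second eigenvalue `1`. -/
noncomputable def normSecondEig {V : Type*} [Fintype V] (d : ℕ) (G : SimpleGraph V) : ℝ :=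
  if d = 0 then 1
  else sSup {r : ℝ | ∃ x : V → ℝ, x ≠ 0 ∧ (∑ i, x i) = 0 ∧
    r = (∑ i, ∑ j, (if G.Adj i j then (d : ℝ)⁻¹ else 0) * x i * x j) / ∑ i, (x i) ^ 2}

/-- `X` is a proper `q`-coloring of `G`. -/
def IsProperColoring {V : Type*} {q : ℕ} (G : SimpleGraph V) (X : V → Fin q) : Prop :=
  ∀ ⦃u v : V⦄, G.Adj u v → X u ≠ X v

/-- The distance between two `q`-colorings: the minimum Hamming distance between
`X` and `σ ∘ Y` over all permutations `σ` of the colors. -/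
noncomputable def colDist {V : Type*} [Fintype V] {q : ℕ} (X Y : V → Fin q) : ℕ :=
  ⨅ σ : Equiv.Perm (Fin q), hammingDist X (σ ∘ Y)

/-- `C` is a `δ`-distinct set of proper `q`-colorings of `G`: every member is a proper
coloring and every pair of distinct members has distance at least `δ * |V|`. -/
def IsDistinctSet {V : Type*} [Fintype V] {q : ℕ} (G : SimpleGraph V) (δ : ℝ)
    (C : Finset (V → Fin q)) : Prop :=
  (∀ X ∈ C, IsProperColoring G X) ∧
  ∀ X ∈ C, ∀ Y ∈ C, X ≠ Y → δ * (Fintype.card V : ℝ) ≤ (colDist X Y : ℝ)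

/-- `f_{δ,λ,d}(n)`: the maximum size of a `δ`-distinct set of proper `q`-colorings of a
`d`-regular graph on at most `n` vertices with normalized second eigenvalue at most `lam`
(`0` if there is no such graph). -/
noncomputable def colorCount (q : ℕ) (δ lam : ℝ) (d n : ℕ) : ℕ :=
  sSup {m : ℕ | ∃ k ≤ n, ∃ G : SimpleGraph (Fin k),
    G.IsRegularOfDegree d ∧ normSecondEig d G ≤ lam ∧
    ∃ C : Finset (Fin k → Fin q), IsDistinctSet G δ C ∧ C.card = m}

/-- `(δ, lam)` is in the exponential regime. -/
noncomputable def ExponentialRegime (q : ℕ) (δ lam : ℝ) : Prop :=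
  0 < ⨆ d : ℕ, Filter.limsup (fun n : ℕ => Real.log (colorCount q δ lam d n) / n) Filter.atTop

/-- `(δ, lam)` is in the constant regime. -/
noncomputable def ConstantRegime (q : ℕ) (δ lam : ℝ) : Prop :=
  (⨆ d : ℕ, Filter.limsup (fun n : ℕ => (colorCount q δ lam d n : ENNReal)) Filter.atTop) < ⊤

/-- `(δ, lam)` is in the unique regime. -/
noncomputable def UniqueRegime (q : ℕ) (δ lam : ℝ) : Prop :=
  (⨆ d : ℕ, Filter.limsup (fun n : ℕ => (colorCount q δ lam d n : ENNReal)) Filter.atTop) = 1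

/-!
Take `p = q - 1` and the complete bipartite graph `K_{p,p}`. It is `p`-regular, and its
quadratic form is `2 p⁻¹ (∑_left x) (∑_right x)`, which is `-2 p⁻¹ (∑_left x)² ≤ 0` when
`∑ x = 0`; so `λ₂(K_{p,p}) ≤ 0 < λ`. Colour the left side with one colour and the right side
bijectively with the other `p` colours, and let the second colouring swap the roles of the sides.
After any permutation of the colours, a constant map and an injective map agree in at most one
vertex of each side, so the two colourings are at distance at least
`2p - 2 = (1 - 1/(q-1)) · 2p`. Hence `f(n) ≥ 2` for every `n ≥ 2p`.
-/

theorem hammingDist_sum_elim {α γ β : Type*} [Fintype α] [Fintype γ] [DecidableEq β]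
    (a c : α → β) (b d : γ → β) :
    hammingDist (Sum.elim a b) (Sum.elim c d) = hammingDist a c + hammingDist b d := by
  simp only [hammingDist, Finset.card_filter, Fintype.sum_sum_type, Sum.elim_inl, Sum.elim_inr]
  rfl

theorem card_sub_one_le_hammingDist_const {ι β : Type*} [Fintype ι] [DecidableEq β]
    (b : β) {g : ι → β} (hg : Function.Injective g) :
    Fintype.card ι - 1 ≤ hammingDist (fun _ => b) g := by
  have hfix : (Finset.univ.filter fun i => b = g i).card ≤ 1 :=
    Finset.card_le_one.2 fun i hi j hj => hg <| by
      simp only [Finset.mem_filter] at hi hj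
      rw [← hi.2, ← hj.2]
  have hsplit := Finset.card_filter_add_card_filter_not (s := Finset.univ) fun i => b = g i
  rw [Finset.card_univ] at hsplit
  change _ ≤ (Finset.univ.filter fun i => ¬ b = g i).card
  omega

theorem card_sub_one_le_hammingDist_const' {ι β : Type*} [Fintype ι] [DecidableEq β]
    (b : β) {g : ι → β} (hg : Function.Injective g) :
    Fintype.card ι - 1 ≤ hammingDist g (fun _ => b) :=
  hammingDist_comm (fun _ => b) g ▸ card_sub_one_le_hammingDist_const b hg

theorem hammingDist_comp_equiv {V W β : Type*} [Fintype V] [Fintype W] [DecidableEq β]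
    (e : V ≃ W) (x y : W → β) : hammingDist (x ∘ e) (y ∘ e) = hammingDist x y :=
  Finset.card_equiv e fun _ => by simp

theorem colDist_comp_equiv {V W : Type*} [Fintype V] [Fintype W] {q : ℕ}
    (e : V ≃ W) (X Y : W → Fin q) : colDist (X ∘ e) (Y ∘ e) = colDist X Y := by
  simp only [colDist, ← Function.comp_assoc, hammingDist_comp_equiv]

noncomputable def rayleighQuotient {V : Type*} [Fintype V] (d : ℕ) (G : SimpleGraph V)
    (x : V → ℝ) : ℝ :=
  (∑ i, ∑ j, (if G.Adj i j then (d : ℝ)⁻¹ else 0) * x i * x j) / ∑ i, (x i) ^ 2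

theorem normSecondEig_of_ne_zero {V : Type*} [Fintype V] {d : ℕ} (hd : d ≠ 0)
    (G : SimpleGraph V) :
    normSecondEig d G =
      sSup {r : ℝ | ∃ x : V → ℝ, x ≠ 0 ∧ (∑ i, x i) = 0 ∧ r = rayleighQuotient d G x} :=
  if_neg hd

namespace SimpleGraph.Iso

variable {V W : Type*} [Fintype V] [Fintype W] {G : SimpleGraph V} {G' : SimpleGraph W}

theorem isRegularOfDegree (f : G ≃g G') {d : ℕ} (h : G.IsRegularOfDegree d) :
    G'.IsRegularOfDegree d := fun w => by
  rw [← f.apply_symm_apply w, f.degree_eq]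
  exact h _

theorem rayleighQuotient_comp (f : G ≃g G') (d : ℕ) (x : W → ℝ) :
    rayleighQuotient d G (x ∘ f) = rayleighQuotient d G' x := by
  unfold rayleighQuotient
  congr 1
  · exact Fintype.sum_equiv f.toEquiv _ _ fun i =>
      Fintype.sum_equiv f.toEquiv _ _ fun j => by simp [f.map_adj_iff]
  · exact Fintype.sum_equiv f.toEquiv _ _ fun i => by simp

theorem normSecondEig_eq (f : G ≃g G') (d : ℕ) : normSecondEig d G = normSecondEig d G' := by
  rcases eq_or_ne d 0 with rfl | hd
  · simp [normSecondEig]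
  rw [normSecondEig_of_ne_zero hd, normSecondEig_of_ne_zero hd]
  congr 1
  ext r
  constructor
  · rintro ⟨x, hx, hsum, rfl⟩
    refine ⟨x ∘ f.symm, ?_, ?_, ?_⟩
    · exact fun h => hx <| by simpa [Function.comp_assoc] using congrArg (· ∘ f) h
    · rwa [Fintype.sum_equiv f.symm.toEquiv (x ∘ f.symm) x fun _ => rfl]
    · rw [← f.rayleighQuotient_comp, Function.comp_assoc, f.symm_comp_self, Function.comp_id]
  · rintro ⟨y, hy, hsum, rfl⟩
    refine ⟨y ∘ f, ?_, ?_, (f.rayleighQuotient_comp d y).symm⟩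
    · exact fun h => hy <| by simpa [Function.comp_assoc] using congrArg (· ∘ f.symm) h
    · rwa [Fintype.sum_equiv f.toEquiv (y ∘ f) y fun _ => rfl]

theorem isDistinctSet_map {q : ℕ} {δ : ℝ} (f : G ≃g G') {C : Finset (V → Fin q)}
    (hC : IsDistinctSet G δ C) :
    IsDistinctSet G' δ (C.map (f.toEquiv.arrowCongr (Equiv.refl (Fin q))).toEmbedding) := by
  obtain ⟨hproper, hdist⟩ := hC
  simp only [IsDistinctSet, Finset.forall_mem_map, Equiv.coe_toEmbedding]
  refine ⟨fun X hX u v huv => hproper X hX (f.symm.map_adj_iff.2 huv), fun X hX Y hY hXY => ?_⟩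
  rw [← Fintype.card_congr f.toEquiv]
  convert hdist X hX Y hY (fun h => hXY (h ▸ rfl)) using 2
  exact colDist_comp_equiv f.symm.toEquiv X Y

end SimpleGraph.Iso

theorem le_colorCount {V : Type*} [Fintype V] {q d n : ℕ} {δ lam : ℝ} {G : SimpleGraph V}
    (hV : Fintype.card V ≤ n) (hreg : G.IsRegularOfDegree d) (heig : normSecondEig d G ≤ lam)
    {C : Finset (V → Fin q)} (hC : IsDistinctSet G δ C) :
    C.card ≤ colorCount q δ lam d n := by
  have hbdd : BddAbove {m : ℕ | ∃ k ≤ n, ∃ G : SimpleGraph (Fin k),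
      G.IsRegularOfDegree d ∧ normSecondEig d G ≤ lam ∧
      ∃ C : Finset (Fin k → Fin q), IsDistinctSet G δ C ∧ C.card = m} := by
    refine ⟨(q + 1) ^ n, ?_⟩
    rintro _ ⟨k, hk, -, -, -, C, -, rfl⟩
    calc C.card ≤ q ^ k := by simpa using C.card_le_univ
      _ ≤ (q + 1) ^ k := Nat.pow_le_pow_left q.le_succ k
      _ ≤ (q + 1) ^ n := Nat.pow_le_pow_right q.succ_pos hk
  let f : G ≃g G.map (Fintype.equivFin V).toEmbedding := SimpleGraph.Iso.map _ G
  refine le_csSup hbdd ⟨_, hV, _, f.isRegularOfDegree hreg, f.normSecondEig_eq d ▸ heig, _,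
    f.isDistinctSet_map hC, Finset.card_map _⟩

theorem completeBipartiteGraph_isRegularOfDegree (V : Type*) [Fintype V] :
    (completeBipartiteGraph V V).IsRegularOfDegree (Fintype.card V) := by
  rintro (v | v) <;>
  · rw [← SimpleGraph.card_neighborFinset_eq_degree, SimpleGraph.neighborFinset_eq_filter,
      Finset.card_filter, Fintype.sum_sum_type]
    simp

theorem sum_adj_mul_completeBipartiteGraph {V W : Type*} [Fintype V] [Fintype W] (c : ℝ)
    (x : V ⊕ W → ℝ) :
    ∑ i, ∑ j, (if (completeBipartiteGraph V W).Adj i j then c else 0) * x i * x j =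
      2 * c * (∑ a, x (.inl a)) * ∑ b, x (.inr b) := by
  simp only [completeBipartiteGraph_adj, ite_mul, zero_mul, Fintype.sum_sum_type,
    Sum.isRight_inl, Bool.false_eq_true, and_false, Sum.isLeft_inl, and_true, false_or,
    Finset.sum_ite_irrel, Finset.sum_const_zero, Sum.isRight_inr, Sum.isLeft_inr, or_false,
    ↓reduceIte, zero_add, add_zero, Finset.mul_sum, Finset.sum_mul]
  rw [Finset.sum_comm]
  simp only [← Finset.sum_add_distrib]
  ring_nf

theorem normSecondEig_completeBipartiteGraph_nonpos (V W : Type*) [Fintype V] [Fintype W]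
    {d : ℕ} (hd : d ≠ 0) : normSecondEig d (completeBipartiteGraph V W) ≤ 0 := by
  rw [normSecondEig_of_ne_zero hd]
  refine Real.sSup_nonpos ?_
  rintro _ ⟨x, -, hsum, rfl⟩
  refine div_nonpos_of_nonpos_of_nonneg ?_ (Finset.sum_nonneg fun i _ => sq_nonneg (x i))
  rw [Fintype.sum_sum_type] at hsum
  rw [sum_adj_mul_completeBipartiteGraph, eq_neg_of_add_eq_zero_right hsum]
  nlinarith [sq_nonneg (∑ a, x (.inl a)), (by positivity : (0 : ℝ) ≤ (d : ℝ)⁻¹)]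

def monoLeftColoring (p : ℕ) : Fin p ⊕ Fin p → Fin (p + 1) :=
  Sum.elim (fun _ => 0) Fin.succ

def monoRightColoring (p : ℕ) : Fin p ⊕ Fin p → Fin (p + 1) :=
  Sum.elim Fin.succ (fun _ => 0)

theorem isProperColoring_monoLeftColoring (p : ℕ) :
    IsProperColoring (completeBipartiteGraph (Fin p) (Fin p)) (monoLeftColoring p) := by
  rintro (u | u) (v | v) h <;> simp_all [monoLeftColoring, Fin.succ_ne_zero, eq_comm]

theorem isProperColoring_monoRightColoring (p : ℕ) :
    IsProperColoring (completeBipartiteGraph (Fin p) (Fin p)) (monoRightColoring p) := by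
  rintro (u | u) (v | v) h <;> simp_all [monoRightColoring, Fin.succ_ne_zero, eq_comm]

theorem monoLeftColoring_ne_monoRightColoring {p : ℕ} (hp : p ≠ 0) :
    monoLeftColoring p ≠ monoRightColoring p := fun h => by
  simpa [monoLeftColoring, monoRightColoring] using congrFun h (Sum.inl ⟨0, Nat.pos_of_ne_zero hp⟩)

theorem two_mul_sub_two_le_hammingDist_monoLeft_monoRight (p : ℕ) (σ : Equiv.Perm (Fin (p + 1))) :
    2 * p - 2 ≤ hammingDist (monoLeftColoring p) (σ ∘ monoRightColoring p) := by
  rw [monoLeftColoring, monoRightColoring, Sum.comp_elim, hammingDist_sum_elim]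
  have hl := card_sub_one_le_hammingDist_const 0 (σ.injective.comp (Fin.succ_injective p))
  have hr := card_sub_one_le_hammingDist_const' (σ 0) (Fin.succ_injective p)
  simp only [Fintype.card_fin] at hl hr
  exact (by omega : 2 * p - 2 ≤ (p - 1) + (p - 1)).trans (add_le_add hl hr)

theorem two_mul_sub_two_le_hammingDist_monoRight_monoLeft (p : ℕ) (σ : Equiv.Perm (Fin (p + 1))) :
    2 * p - 2 ≤ hammingDist (monoRightColoring p) (σ ∘ monoLeftColoring p) := by
  rw [monoLeftColoring, monoRightColoring, Sum.comp_elim, hammingDist_sum_elim]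
  have hl := card_sub_one_le_hammingDist_const' (σ 0) (Fin.succ_injective p)
  have hr := card_sub_one_le_hammingDist_const 0 (σ.injective.comp (Fin.succ_injective p))
  simp only [Fintype.card_fin] at hl hr
  exact (by omega : 2 * p - 2 ≤ (p - 1) + (p - 1)).trans (add_le_add hl hr)

theorem isDistinctSet_monoColorings {p : ℕ} (hp : p ≠ 0) :
    IsDistinctSet (completeBipartiteGraph (Fin p) (Fin p)) (1 - 1 / (p : ℝ))
      {monoLeftColoring p, monoRightColoring p} := by
  have hbound : ∀ X Y : Fin p ⊕ Fin p → Fin (p + 1),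
      (∀ σ : Equiv.Perm (Fin (p + 1)), 2 * p - 2 ≤ hammingDist X (σ ∘ Y)) →
      (1 - 1 / (p : ℝ)) * Fintype.card (Fin p ⊕ Fin p) ≤ colDist X Y := fun X Y h => by
    have hcast : (1 - 1 / (p : ℝ)) * Fintype.card (Fin p ⊕ Fin p) = ((2 * p - 2 : ℕ) : ℝ) := by
      rw [Fintype.card_sum, Fintype.card_fin, Nat.cast_sub (by omega)]
      field_simp
      push_cast
      ring
    rw [hcast]
    exact_mod_cast le_ciInf h
  refine ⟨?_, ?_⟩
  · simp only [Finset.mem_insert, Finset.mem_singleton]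
    rintro X (rfl | rfl)
    exacts [isProperColoring_monoLeftColoring p, isProperColoring_monoRightColoring p]
  · simp only [Finset.mem_insert, Finset.mem_singleton]
    rintro X (rfl | rfl) Y (rfl | rfl) hXY <;> first
      | exact absurd rfl hXY
      | exact hbound _ _ (two_mul_sub_two_le_hammingDist_monoLeft_monoRight p)
      | exact hbound _ _ (two_mul_sub_two_le_hammingDist_monoRight_monoLeft p)

/-- For every `lam > 0`, the pair `(1 - 1/(q-1), lam)` is not in the unique
regime: `sup_{d ≥ 0} limsup_{n → ∞} f_{1-1/(q-1), lam, d}(n) > 1`. -/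
theorem not_uniqueRegime_at_threshold (q : ℕ) (hq : 3 ≤ q) :
    ∀ lam : ℝ, 0 < lam →
      1 < ⨆ d : ℕ, Filter.limsup
        (fun n : ℕ => (colorCount q (1 - 1 / ((q : ℝ) - 1)) lam d n : ENNReal))
        Filter.atTop := by
  intro lam hlam
  obtain ⟨p, rfl⟩ : ∃ p, q = p + 1 := ⟨q - 1, by omega⟩
  have hp : p ≠ 0 := by omega
  have hδ : ((p + 1 : ℕ) : ℝ) - 1 = p := by push_cast; ring
  have htwo : ∀ n ≥ p + p, 2 ≤ colorCount (p + 1) (1 - 1 / (p : ℝ)) lam p n := fun n hn =>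
    Finset.card_pair (monoLeftColoring_ne_monoRightColoring hp) ▸
      le_colorCount (by simpa using hn)
        (by simpa using completeBipartiteGraph_isRegularOfDegree (Fin p))
        ((normSecondEig_completeBipartiteGraph_nonpos _ _ hp).trans hlam.le)
        (isDistinctSet_monoColorings hp)
  rw [hδ]
  calc (1 : ENNReal) < 2 := by norm_num
    _ ≤ Filter.limsup (fun n => (colorCount (p + 1) (1 - 1 / (p : ℝ)) lam p n : ENNReal))
        Filter.atTop :=
      Filter.le_limsup_of_frequently_le' <| Filter.Eventually.frequently <|
        Filter.eventually_atTop.2 ⟨p + p, fun n hn => by exact_mod_cast htwo n hn⟩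
    _ ≤ _ := le_iSup (fun d => Filter.limsup
        (fun n => (colorCount (p + 1) (1 - 1 / (p : ℝ)) lam d n : ENNReal)) Filter.atTop) p
end

section
/- For every ε > 0, the pair (1 − 1/q, 1/(q−1)² − ε) is in the unique regime. -/
open scoped Classical

/-!
If two proper colorings `X`, `Y` are at distance at least `(1 - 1/q) n`, then for every
permutation `σ` of the colors, `X` and `σ ∘ Y` agree on at most `n / q` vertices. Averaged over
all `σ` the agreement is exactly `n / q`, so it equals `n / q` for every `σ`. This forces the
doubly centered joint color count of `(X, Y)` to vanish: each of the `q²` vectors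
`v ↦ (𝟙[X v = a] - 1/q) (𝟙[Y v = b] - 1/q)` is orthogonal to the constant vector. Summing the
Rayleigh bound `λ₂ ≤ λ` over these vectors, the quadratic forms add up to `n / q²` (adjacent
vertices get distinct colors in both colorings) and the squared norms to `n (1 - 1/q)²`, whence
`λ (q - 1)² ≥ 1`. Below that threshold a distinct set therefore has at most one element, and the
empty graph shows that one is attained.
-/

open Finset

section Spectral

variable {V : Type*} {G : SimpleGraph V} {d : ℕ}

noncomputable def normAdj (G : SimpleGraph V) (d : ℕ) (i j : V) : ℝ :=
  if G.Adj i j then (d : ℝ)⁻¹ else 0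

lemma normAdj_nonneg (i j : V) : 0 ≤ normAdj G d i j := by
  unfold normAdj
  positivity

variable [Fintype V]

noncomputable def normAdjForm (G : SimpleGraph V) (d : ℕ) (x : V → ℝ) : ℝ :=
  ∑ i, ∑ j, normAdj G d i j * x i * x j

lemma sum_normAdj_row (hG : G.IsRegularOfDegree d) (hd : d ≠ 0) (i : V) :
    ∑ j, normAdj G d i j = 1 := by
  unfold normAdj
  rw [← sum_filter, sum_const, ← SimpleGraph.neighborFinset_eq_filter,
    G.card_neighborFinset_eq_degree, hG i, nsmul_eq_mul]
  exact mul_inv_cancel₀ (Nat.cast_ne_zero.mpr hd)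

lemma sum_normAdj_col (hG : G.IsRegularOfDegree d) (hd : d ≠ 0) (j : V) :
    ∑ i, normAdj G d i j = 1 := by
  simpa only [normAdj, G.adj_comm] using sum_normAdj_row hG hd j

lemma normAdjForm_le_sum_sq (hG : G.IsRegularOfDegree d) (hd : d ≠ 0) (x : V → ℝ) :
    normAdjForm G d x ≤ ∑ i, x i ^ 2 := by
  have hrow : ∑ i, ∑ j, normAdj G d i j * x i ^ 2 = ∑ i, x i ^ 2 := by
    simp only [← sum_mul, sum_normAdj_row hG hd, one_mul]
  have hcol : ∑ i, ∑ j, normAdj G d i j * x j ^ 2 = ∑ j, x j ^ 2 := by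
    rw [sum_comm]
    simp only [← sum_mul, sum_normAdj_col hG hd, one_mul]
  have hlap : 0 ≤ ∑ i, ∑ j, normAdj G d i j * (x i - x j) ^ 2 :=
    sum_nonneg fun i _ => sum_nonneg fun j _ => mul_nonneg (normAdj_nonneg i j) (sq_nonneg _)
  have hexp : ∑ i, ∑ j, normAdj G d i j * (x i - x j) ^ 2 = ∑ i, ∑ j, normAdj G d i j * x i ^ 2
      + ∑ i, ∑ j, normAdj G d i j * x j ^ 2 - 2 * normAdjForm G d x := by
    simp only [normAdjForm, mul_sum, ← sum_add_distrib, ← sum_sub_distrib]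
    exact sum_congr rfl fun i _ => sum_congr rfl fun j _ => by ring
  linarith

lemma normAdjForm_le_of_normSecondEig_le {lam : ℝ} (hG : G.IsRegularOfDegree d) (hd : d ≠ 0)
    (h : normSecondEig d G ≤ lam) {x : V → ℝ} (hx : ∑ i, x i = 0) :
    normAdjForm G d x ≤ lam * ∑ i, x i ^ 2 := by
  rcases eq_or_ne x 0 with rfl | hx0
  · simp [normAdjForm]
  have hpos : 0 < ∑ i, x i ^ 2 := by
    obtain ⟨i, hi⟩ := Function.ne_iff.mp hx0
    exact sum_pos' (fun j _ => sq_nonneg (x j)) ⟨i, mem_univ i, pow_two_pos_of_ne_zero hi⟩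
  have hsup : sSup {r : ℝ | ∃ y : V → ℝ, y ≠ 0 ∧ ∑ i, y i = 0 ∧
      r = normAdjForm G d y / ∑ i, y i ^ 2} ≤ lam := by
    rwa [normSecondEig, if_neg hd] at h
  have hbdd : BddAbove {r : ℝ | ∃ y : V → ℝ, y ≠ 0 ∧ ∑ i, y i = 0 ∧
      r = normAdjForm G d y / ∑ i, y i ^ 2} := by
    refine ⟨1, ?_⟩
    rintro r ⟨y, -, -, rfl⟩
    exact div_le_one_of_le₀ (normAdjForm_le_sum_sq hG hd y) (by positivity)
  have := (le_csSup hbdd ⟨x, hx0, hx, rfl⟩).trans hsup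
  rwa [div_le_iff₀ hpos] at this

lemma sum_normAdjForm {ι : Type*} [Fintype ι] (x : ι → V → ℝ) :
    ∑ t, normAdjForm G d (x t) = ∑ i, ∑ j, normAdj G d i j * ∑ t, x t i * x t j := by
  simp only [normAdjForm, mul_sum]
  rw [sum_comm]
  refine sum_congr rfl fun i _ => ?_
  rw [sum_comm]
  exact sum_congr rfl fun j _ => sum_congr rfl fun t _ => by ring

end Spectral

section Perm

variable {α : Type*} [Fintype α] [DecidableEq α]

lemma card_perm_apply_eq_mul_card (a b : α) :
    #{σ : Equiv.Perm α | σ a = b} * Fintype.card α = Fintype.card (Equiv.Perm α) := by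
  have hfiber (b' : α) : #{σ : Equiv.Perm α | σ a = b'} = #{σ : Equiv.Perm α | σ a = b} :=
    card_nbij' (Equiv.swap b' b * ·) (Equiv.swap b' b * ·)
      (fun σ hσ => by simp_all [Equiv.swap_apply_left])
      (fun σ hσ => by simp_all [Equiv.swap_apply_right])
      (fun σ _ => Equiv.swap_mul_self_mul _ _ _)
      (fun σ _ => Equiv.swap_mul_self_mul _ _ _)
  rw [← card_univ (α := Equiv.Perm α), card_eq_sum_card_fiberwise (s := univ) (t := univ)
    (f := fun σ : Equiv.Perm α => σ a) (fun σ _ => mem_univ _)]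
  simp only [hfiber, sum_const, card_univ, smul_eq_mul, mul_comm]

lemma sum_perm_indicator_apply_eq (x y : α) :
    ∑ σ : Equiv.Perm α, (if x = σ y then (1 : ℝ) else 0)
      = Fintype.card (Equiv.Perm α) / Fintype.card α := by
  have hα : (Fintype.card α : ℝ) ≠ 0 := Nat.cast_ne_zero.mpr (Fintype.card_pos_iff.mpr ⟨x⟩).ne'
  rw [sum_boole, eq_div_iff hα, ← card_perm_apply_eq_mul_card y x]
  simp [eq_comm]

lemma eq_zero_of_sum_perm_eq_zero {M : α → α → ℝ} (hrow : ∀ a, ∑ b, M a b = 0)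
    (hcol : ∀ b, ∑ a, M a b = 0) (hperm : ∀ σ : Equiv.Perm α, ∑ b, M (σ b) b = 0) : M = 0 := by
  -- composing `σ` with the transposition `(c e)` changes the permutation sum in two terms only
  have hexchange (σ : Equiv.Perm α) (c e : α) :
      M (σ c) c + M (σ e) e = M (σ c) e + M (σ e) c := by
    rcases eq_or_ne c e with rfl | hce
    · rfl
    have hswap : ∑ b, M (σ b) (Equiv.swap c e b) = 0 := by
      rw [← hperm (σ * Equiv.swap c e), ← Equiv.sum_comp (Equiv.swap c e)]
      simp
    have hdiff : ∑ b, (M (σ b) b - M (σ b) (Equiv.swap c e b)) = 0 := by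
      rw [sum_sub_distrib, hperm, hswap, sub_self]
    rw [Fintype.sum_eq_add c e hce (fun b hb => by
      rw [Equiv.swap_apply_of_ne_of_ne hb.1 hb.2, sub_self])] at hdiff
    simp only [Equiv.swap_apply_left, Equiv.swap_apply_right] at hdiff
    linarith
  ext i c
  set τ := Equiv.swap c i
  -- summing the exchange identity over `e` kills every term except `card α • M i c`
  have hsum := sum_congr rfl fun e (_ : e ∈ univ) => hexchange τ c e
  simp only [sum_add_distrib, sum_const, card_univ, nsmul_eq_mul, hperm,
    Equiv.sum_comp τ (M · c), hcol, Equiv.swap_apply_left, τ, hrow] at hsum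
  have hα : (Fintype.card α : ℝ) ≠ 0 := Nat.cast_ne_zero.mpr (Fintype.card_pos_iff.mpr ⟨i⟩).ne'
  simpa [hα] using hsum

end Perm

section Coloring

variable {q : ℕ}

noncomputable def centeredIndicator (c a : Fin q) : ℝ := (if c = a then 1 else 0) - 1 / q

lemma sum_centeredIndicator (c : Fin q) : ∑ a, centeredIndicator c a = 0 := by
  have hq : (q : ℝ) ≠ 0 := Nat.cast_ne_zero.mpr (Fin.pos c).ne'
  simp [centeredIndicator, sum_sub_distrib, hq]

lemma sum_centeredIndicator_mul (c c' : Fin q) :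
    ∑ a, centeredIndicator c a * centeredIndicator c' a = (if c = c' then 1 else 0) - 1 / q := by
  have hq : (q : ℝ) ≠ 0 := Nat.cast_ne_zero.mpr (Fin.pos c).ne'
  have hexp (a : Fin q) : centeredIndicator c a * centeredIndicator c' a
      = (if c = a then (if c' = a then 1 else 0) else 0) - (if c = a then 1 else 0) / q
        - (if c' = a then 1 else 0) / q + 1 / q ^ 2 := by
    simp only [centeredIndicator]
    split_ifs <;> field_simp <;> ring
  simp [hexp, sum_add_distrib, sum_sub_distrib, ← sum_div, eq_comm]
  field_simp
  ring

variable {V : Type*} [Fintype V]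

noncomputable def pairIndicator (X Y : V → Fin q) (a b : Fin q) (v : V) : ℝ :=
  centeredIndicator (X v) a * centeredIndicator (Y v) b

lemma sum_perm_pairIndicator (X Y : V → Fin q) (σ : Equiv.Perm (Fin q)) :
    ∑ b, ∑ v, pairIndicator X Y (σ b) b v
      = ∑ v, (if X v = σ (Y v) then (1 : ℝ) else 0) - Fintype.card V / q := by
  have hreindex (c a : Fin q) : centeredIndicator c (σ a) = centeredIndicator (σ.symm c) a := by
    simp only [centeredIndicator, Equiv.symm_apply_eq]
  rw [sum_comm]
  simp only [pairIndicator, hreindex, sum_centeredIndicator_mul, Equiv.symm_apply_eq,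
    sum_sub_distrib, sum_const, card_univ, nsmul_eq_mul]
  ring

lemma agreement_eq_of_le_colDist {X Y : V → Fin q}
    (h : (1 - 1 / (q : ℝ)) * Fintype.card V ≤ colDist X Y) (σ : Equiv.Perm (Fin q)) :
    ∑ v, (if X v = σ (Y v) then (1 : ℝ) else 0) = Fintype.card V / q := by
  have hle (σ : Equiv.Perm (Fin q)) :
      ∑ v, (if X v = σ (Y v) then (1 : ℝ) else 0) - Fintype.card V / q ≤ 0 := by
    have hdist : colDist X Y ≤ hammingDist X (σ ∘ Y) := ciInf_le (OrderBot.bddBelow _) σ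
    have hsplit : (#{v | X v = σ (Y v)} : ℝ) + hammingDist X (σ ∘ Y) = Fintype.card V := by
      exact_mod_cast card_filter_add_card_filter_not _
    have : (1 - 1 / (q : ℝ)) * Fintype.card V ≤ hammingDist X (σ ∘ Y) :=
      h.trans (by exact_mod_cast hdist)
    rw [sum_boole]
    have hk : (1 - 1 / (q : ℝ)) * Fintype.card V = Fintype.card V - Fintype.card V / q := by ring
    linarith
  -- averaged over all permutations the agreement is exactly `|V| / q`
  have havg : ∑ σ : Equiv.Perm (Fin q),
      (∑ v, (if X v = σ (Y v) then (1 : ℝ) else 0) - Fintype.card V / q) = 0 := by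
    rw [sum_sub_distrib, sum_comm]
    simp only [sum_perm_indicator_apply_eq, Fintype.card_fin, sum_const, card_univ, nsmul_eq_mul]
    ring
  have := (sum_eq_zero_iff_of_nonpos fun σ _ => hle σ).mp havg σ (mem_univ σ)
  linarith

lemma sum_pairIndicator_eq_zero {X Y : V → Fin q}
    (h : (1 - 1 / (q : ℝ)) * Fintype.card V ≤ colDist X Y) (a b : Fin q) :
    ∑ v, pairIndicator X Y a b v = 0 := by
  suffices hM : (fun a b => ∑ v, pairIndicator X Y a b v) = 0 from congrFun (congrFun hM a) b
  refine eq_zero_of_sum_perm_eq_zero (fun a => ?_) (fun b => ?_) (fun σ => ?_)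
  · rw [sum_comm]
    simp [pairIndicator, ← mul_sum, sum_centeredIndicator]
  · rw [sum_comm]
    simp [pairIndicator, ← sum_mul, sum_centeredIndicator]
  · rw [sum_perm_pairIndicator, agreement_eq_of_le_colDist h, sub_self]

lemma sum_sq_pairIndicator (X Y : V → Fin q) :
    ∑ a, ∑ b, ∑ v, pairIndicator X Y a b v ^ 2 = Fintype.card V * (1 - 1 / q) ^ 2 := by
  have hv (v : V) : ∑ a, ∑ b, pairIndicator X Y a b v ^ 2 = (1 - 1 / q) ^ 2 := by
    have hXv := sum_centeredIndicator_mul (X v) (X v)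
    have hYv := sum_centeredIndicator_mul (Y v) (Y v)
    rw [if_pos rfl] at hXv hYv
    calc ∑ a, ∑ b, pairIndicator X Y a b v ^ 2
        = (∑ a, centeredIndicator (X v) a * centeredIndicator (X v) a) *
            ∑ b, centeredIndicator (Y v) b * centeredIndicator (Y v) b := by
          rw [sum_mul_sum]
          exact sum_congr rfl fun a _ => sum_congr rfl fun b _ => by rw [pairIndicator]; ring
      _ = (1 - 1 / q) ^ 2 := by rw [hXv, hYv, sq]
  rw [sum_congr rfl fun a _ => sum_comm, sum_comm]
  simp [hv]

lemma sum_normAdjForm_pairIndicator {G : SimpleGraph V} {d : ℕ} (hG : G.IsRegularOfDegree d)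
    (hd : d ≠ 0) {X Y : V → Fin q} (hX : IsProperColoring G X) (hY : IsProperColoring G Y) :
    ∑ a, ∑ b, normAdjForm G d (pairIndicator X Y a b) = Fintype.card V / q ^ 2 := by
  have hgram (i j : V) : ∑ a, ∑ b, pairIndicator X Y a b i * pairIndicator X Y a b j
      = ((if X i = X j then 1 else 0) - 1 / q) * ((if Y i = Y j then 1 else 0) - 1 / q) := by
    simp only [← sum_centeredIndicator_mul, sum_mul_sum, pairIndicator]
    refine sum_congr rfl fun a _ => sum_congr rfl fun b _ => by ring
  -- only edges carry weight, and the colors differ across an edge in both colorings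
  have hedge (i j : V) : normAdj G d i j * (((if X i = X j then 1 else 0) - 1 / q) *
      ((if Y i = Y j then 1 else 0) - 1 / q)) = normAdj G d i j / q ^ 2 := by
    by_cases hij : G.Adj i j
    · simp only [hX hij, hY hij, if_false]
      ring
    · simp [normAdj, hij]
  calc ∑ a, ∑ b, normAdjForm G d (pairIndicator X Y a b)
      = ∑ i, ∑ j, normAdj G d i j *
          ∑ a, ∑ b, pairIndicator X Y a b i * pairIndicator X Y a b j := by
        rw [← Fintype.sum_prod_type', sum_normAdjForm]
        simp only [Fintype.sum_prod_type]
    _ = ∑ i : V, 1 / (q : ℝ) ^ 2 := by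
        simp only [hgram, hedge, ← sum_div, sum_normAdj_row hG hd]
    _ = Fintype.card V / q ^ 2 := by simp [div_eq_mul_inv]

theorem eq_of_le_colDist {G : SimpleGraph V} {d : ℕ} {lam : ℝ} (hG : G.IsRegularOfDegree d)
    (heig : normSecondEig d G ≤ lam) (hlam : lam < 1 / ((q : ℝ) - 1) ^ 2)
    {X Y : V → Fin q} (hX : IsProperColoring G X) (hY : IsProperColoring G Y)
    (h : (1 - 1 / (q : ℝ)) * Fintype.card V ≤ colDist X Y) : X = Y := by
  by_contra hXY
  obtain ⟨v, hv⟩ := Function.ne_iff.mp hXY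
  have hq : (2 : ℝ) ≤ q := by
    have : Nontrivial (Fin q) := ⟨⟨X v, Y v, hv⟩⟩
    simpa using (Nat.cast_le (α := ℝ)).mpr (Fintype.one_lt_card (α := Fin q))
  have hq1 : 0 < ((q : ℝ) - 1) ^ 2 := by nlinarith
  have hd : d ≠ 0 := by
    rintro rfl
    rw [normSecondEig, if_pos rfl] at heig
    have : 1 / ((q : ℝ) - 1) ^ 2 ≤ 1 := by rw [div_le_one hq1]; nlinarith
    linarith
  have hV : (0 : ℝ) < Fintype.card V / q ^ 2 := by
    have : 0 < Fintype.card V := Fintype.card_pos_iff.mpr ⟨v⟩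
    positivity
  have hbound : (Fintype.card V : ℝ) / q ^ 2 ≤ lam * (Fintype.card V * (1 - 1 / q) ^ 2) := by
    rw [← sum_normAdjForm_pairIndicator hG hd hX hY, ← sum_sq_pairIndicator, mul_sum]
    refine sum_le_sum fun a _ => ?_
    rw [mul_sum]
    exact sum_le_sum fun b _ =>
      normAdjForm_le_of_normSecondEig_le hG hd heig (sum_pairIndicator_eq_zero h a b)
  have : Fintype.card V / q ^ 2 * 1 ≤ Fintype.card V / q ^ 2 * (lam * ((q : ℝ) - 1) ^ 2) := by
    convert hbound using 1
    · ring
    · field_simp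
  rw [lt_div_iff₀ hq1] at hlam
  linarith [le_of_mul_le_mul_left this hV]

lemma card_le_one_of_isDistinctSet {G : SimpleGraph V} {d : ℕ} {lam : ℝ}
    (hG : G.IsRegularOfDegree d) (heig : normSecondEig d G ≤ lam)
    (hlam : lam < 1 / ((q : ℝ) - 1) ^ 2) {C : Finset (V → Fin q)}
    (hC : IsDistinctSet G (1 - 1 / (q : ℝ)) C) : #C ≤ 1 :=
  card_le_one.mpr fun X hX Y hY => by_contra fun hXY =>
    hXY (eq_of_le_colDist hG heig hlam (hC.1 X hX) (hC.1 Y hY) (hC.2 X hX Y hY hXY))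

end Coloring

section Regime

variable {q : ℕ} {δ lam : ℝ} {d : ℕ}

lemma colorCount_le_one (hcard : ∀ {k} {G : SimpleGraph (Fin k)} {C : Finset (Fin k → Fin q)},
      G.IsRegularOfDegree d → normSecondEig d G ≤ lam → IsDistinctSet G δ C → #C ≤ 1)
    (n : ℕ) : colorCount q δ lam d n ≤ 1 :=
  csSup_le' fun _ ⟨_, _, _, hG, heig, _, hC, hm⟩ => hm ▸ hcard hG heig hC

lemma one_le_colorCount (hd : d ≠ 0) (hlam : 0 ≤ lam)
    (hcard : ∀ {k} {G : SimpleGraph (Fin k)} {C : Finset (Fin k → Fin q)},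
      G.IsRegularOfDegree d → normSecondEig d G ≤ lam → IsDistinctSet G δ C → #C ≤ 1)
    (n : ℕ) : 1 ≤ colorCount q δ lam d n := by
  refine le_csSup ⟨1, fun _ ⟨_, _, _, hG, heig, _, hC, hm⟩ => hm ▸ hcard hG heig hC⟩ ?_
  -- the empty graph on no vertices carries exactly one coloring
  refine ⟨0, n.zero_le, ⊥, fun v => v.elim0, ?_, {Fin.elim0}, ⟨?_, ?_⟩, card_singleton _⟩
  · rw [normSecondEig, if_neg hd]
    exact Real.sSup_le (fun r ⟨x, hx, _⟩ => absurd (Subsingleton.elim x 0) hx) hlam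
  · exact fun X _ u => u.elim0
  · exact fun X _ Y _ hXY => absurd (Subsingleton.elim X Y) hXY

lemma uniqueRegime_of_colorCount (hle : ∀ d n, colorCount q δ lam d n ≤ 1)
    (hge : ∀ n, 1 ≤ colorCount q δ lam d n) : UniqueRegime q δ lam := by
  refine le_antisymm (iSup_le fun d' => ?_) (le_iSup_of_le d ?_)
  · refine (Filter.limsup_le_limsup (Filter.Eventually.of_forall fun n => ?_)).trans
      (Filter.limsup_const 1).le
    exact_mod_cast hle d' n
  · refine (Filter.limsup_const 1).symm.le.trans
      (Filter.limsup_le_limsup (Filter.Eventually.of_forall fun n => ?_))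
    exact Nat.one_le_cast.mpr (hge n)

end Regime

theorem uniqueRegime_eigenvalue_threshold_general (q : ℕ) :
    ∀ ε : ℝ, 0 < ε → ε < 1 / ((q : ℝ) - 1) ^ 2 →
      UniqueRegime q (1 - 1 / (q : ℝ)) (1 / ((q : ℝ) - 1) ^ 2 - ε) := by
  intro ε hε hεq
  have hcard {k} {G : SimpleGraph (Fin k)} {C : Finset (Fin k → Fin q)}
      {d : ℕ} (hG : G.IsRegularOfDegree d) (heig : normSecondEig d G ≤ 1 / ((q : ℝ) - 1) ^ 2 - ε)
      (hC : IsDistinctSet G (1 - 1 / (q : ℝ)) C) : #C ≤ 1 :=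
    card_le_one_of_isDistinctSet hG heig (by linarith) hC
  exact uniqueRegime_of_colorCount (fun d => colorCount_le_one hcard)
    (one_le_colorCount one_ne_zero (by linarith) hcard)

/-- For every `ε > 0` (with `1/(q-1)² - ε` still a legitimate eigenvalue
bound, i.e. positive), the pair `(1 - 1/q, 1/(q-1)² - ε)` is in the unique regime. -/
theorem uniqueRegime_eigenvalue_threshold (q : ℕ) (hq : 3 ≤ q) :
    ∀ ε : ℝ, 0 < ε → ε < 1 / ((q : ℝ) - 1) ^ 2 →
      UniqueRegime q (1 - 1 / (q : ℝ)) (1 / ((q : ℝ) - 1) ^ 2 - ε) :=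
  uniqueRegime_eigenvalue_threshold_general q
end

section
/- Let H be a 3-regular graph with normalized second eigenvalue λ₂(H) ≤ 2√2/3, and let G be the gadget-replacement graph of H. Then λ₂(G) ≤ 1 − 10⁻⁴. -/
open scoped Classical

/-- The vertex set of the gadget-replacement graph of a graph `H` on `Fin N`:
the original vertices, together with, for each edge (represented as an ordered
pair `p` with `p.1 < p.2`), the six vertices of a copy of `K₃,₃⁻` (parts
`{0,1,2}` and `{3,4,5}`, with the edge `0–3` removed, so `u = 0` and `v = 3`). -/
abbrev GadgetVertex {N : ℕ} (H : SimpleGraph (Fin N)) : Type :=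
  Fin N ⊕ ({p : Fin N × Fin N // p.1 < p.2 ∧ H.Adj p.1 p.2} × Fin 6)

/-- The gadget-replacement graph of a graph `H`: every edge `xy` of `H` (with `x < y`)
is deleted and replaced by a copy `K_{xy}` of `K₃,₃⁻`, adding the edges `x–u` and
`y–v` where `u = 0` and `v = 3` are the endpoints of the removed edge of `K₃,₃⁻`. -/
def gadgetGraph {N : ℕ} (H : SimpleGraph (Fin N)) : SimpleGraph (GadgetVertex H) :=
  SimpleGraph.fromRel (fun a b =>
    match a, b with
    | Sum.inl x, Sum.inr (e, i) =>
        (e.val.1 = x ∧ i = (0 : Fin 6)) ∨ (e.val.2 = x ∧ i = (3 : Fin 6))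
    | Sum.inr (e, i), Sum.inr (e', j) =>
        e = e' ∧ i.val < 3 ∧ 3 ≤ j.val ∧ ¬(i.val = 0 ∧ j.val = 3)
    | _, _ => False)

/-!
The Rayleigh quotient of a `d`-regular graph is `1 - E(x) / (2d‖x‖²)`, where `E` is the Dirichlet
energy, so `λ₂ ≤ μ` is the Poincaré inequality `2d(1 - μ)‖x‖² ≤ E(x)` for `x ⊥ 1`.

For the gadget graph, centre `x ⊥ 1` at the mean `m` of its values on `V(H)`; then
`‖x‖² ≤ ‖x - m‖²`. Inside a gadget on the edge `pq`, the vertices `p` and `q` are joined by a path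
of length 5 and every gadget vertex is within distance 3 of `p` or `q`, so by Cauchy–Schwarz the
energy of the gadget bounds `(x_p - x_q)²` and, up to `(x_p - m)² + (x_q - m)²`, the squared
deviation from `m` on the gadget. The spectral gap of `H` bounds `∑ᵥ (x_v - m)²` by
`∑_{pq} (x_p - x_q)²`, and summing over the gadgets gives `c‖x‖² ≤ (95 + 14c) E(x)` with
`c = 3/10`.
-/

theorem sq_sub_le_mul_sum_sq_sub {n : ℕ} (u : Fin (n + 1) → ℝ) :
    (u (Fin.last n) - u 0) ^ 2 ≤ n * ∑ i : Fin n, (u i.succ - u i.castSucc) ^ 2 := by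
  have htel : ∑ i : Fin n, (u i.succ - u i.castSucc) = u (Fin.last n) - u 0 := by
    induction n with
    | zero => simp
    | succ n ih =>
      simp only [Fin.sum_univ_castSucc, Fin.succ_castSucc]
      rw [ih (fun i => u i.castSucc)]
      simp
  simpa [htel] using sq_sum_le_card_mul_sum_sq (s := Finset.univ)
    (f := fun i : Fin n => u i.succ - u i.castSucc)

theorem sum_sq_le_sum_sub_sq {V : Type*} [Fintype V] {x : V → ℝ} (hx : ∑ i, x i = 0) (c : ℝ) :
    ∑ i, x i ^ 2 ≤ ∑ i, (x i - c) ^ 2 := by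
  have h : ∑ i, (x i - c) ^ 2 = ∑ i, x i ^ 2 - 2 * c * ∑ i, x i + Fintype.card V * c ^ 2 := by
    simp only [sub_sq, Finset.sum_add_distrib, Finset.sum_sub_distrib, Finset.sum_const,
      Finset.card_univ, nsmul_eq_mul, ← Finset.sum_mul, ← Finset.mul_sum]
    ring
  rw [h, hx, mul_zero, sub_zero]
  exact le_add_of_nonneg_right (by positivity)

theorem sum_sub_mean_eq_zero {V : Type*} [Fintype V] (x : V → ℝ) :
    ∑ i, (x i - (∑ j, x j) / Fintype.card V) = 0 := by
  rw [Finset.sum_sub_distrib, Finset.sum_const, Finset.card_univ, nsmul_eq_mul]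
  rcases (Fintype.card V).eq_zero_or_pos with h | h
  · simp [Fintype.card_eq_zero_iff.mp h]
  · rw [mul_div_cancel₀ _ (Nat.cast_ne_zero.2 h.ne'), sub_self]

namespace SimpleGraph

section Regular

variable {V : Type*} [Fintype V] {G : SimpleGraph V} {d : ℕ}

noncomputable def dirichletEnergy (G : SimpleGraph V) (x : V → ℝ) : ℝ :=
  ∑ i, ∑ j, if G.Adj i j then (x i - x j) ^ 2 else 0

theorem dirichletEnergy_nonneg (x : V → ℝ) : 0 ≤ G.dirichletEnergy x :=
  Finset.sum_nonneg fun _ _ => Finset.sum_nonneg fun _ _ => by split_ifs <;> positivity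

theorem dirichletEnergy_sub_const (x : V → ℝ) (c : ℝ) :
    G.dirichletEnergy (fun i => x i - c) = G.dirichletEnergy x := by
  simp only [dirichletEnergy, sub_sub_sub_cancel_right]

theorem degree_eq_sum_ite (G : SimpleGraph V) (v : V) :
    G.degree v = ∑ w, if G.Adj v w then 1 else 0 := by
  rw [← card_neighborFinset_eq_degree, neighborFinset_eq_filter, Finset.card_filter]

theorem IsRegularOfDegree.sum_adj_const {M : Type*} [AddCommMonoid M]
    (hG : G.IsRegularOfDegree d) (i : V) (c : M) :
    ∑ j, (if G.Adj i j then c else 0) = d • c := by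
  rw [← Finset.sum_filter, Finset.sum_const, ← neighborFinset_eq_filter,
    card_neighborFinset_eq_degree, hG i]

theorem IsRegularOfDegree.dirichletEnergy_eq (hG : G.IsRegularOfDegree d) (x : V → ℝ) :
    G.dirichletEnergy x
      = 2 * d * ∑ i, x i ^ 2 - 2 * ∑ i, ∑ j, if G.Adj i j then x i * x j else 0 := by
  have hterm : ∀ i j, (if G.Adj i j then (x i - x j) ^ 2 else 0)
      = (if G.Adj i j then x i ^ 2 else 0) + (if G.Adj j i then x j ^ 2 else 0)
        - 2 * (if G.Adj i j then x i * x j else 0) := by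
    intro i j
    simp only [G.adj_comm j i]
    split_ifs <;> ring
  have hsq : ∀ i, ∑ j, (if G.Adj i j then x i ^ 2 else 0) = d * x i ^ 2 := fun i => by
    rw [hG.sum_adj_const, nsmul_eq_mul]
  simp only [dirichletEnergy, hterm, Finset.sum_sub_distrib, Finset.sum_add_distrib,
    ← Finset.mul_sum]
  rw [Finset.sum_comm (f := fun i j => if G.Adj j i then x j ^ 2 else 0)]
  simp only [hsq, ← Finset.mul_sum]
  ring

theorem IsRegularOfDegree.rayleighQuotient_le_iff (hG : G.IsRegularOfDegree d) (hd : d ≠ 0)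
    {x : V → ℝ} (hx : x ≠ 0) (μ : ℝ) :
    (∑ i, ∑ j, (if G.Adj i j then (d : ℝ)⁻¹ else 0) * x i * x j) / ∑ i, x i ^ 2 ≤ μ ↔
      2 * d * (1 - μ) * ∑ i, x i ^ 2 ≤ G.dirichletEnergy x := by
  have hS : 0 < ∑ i, x i ^ 2 := by
    obtain ⟨i, hi : x i ≠ 0⟩ := Function.ne_iff.mp hx
    exact Finset.sum_pos' (fun _ _ => sq_nonneg _) ⟨i, Finset.mem_univ i, by positivity⟩
  have hnum : ∑ i, ∑ j, (if G.Adj i j then (d : ℝ)⁻¹ else 0) * x i * x j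
      = (d : ℝ)⁻¹ * ∑ i, ∑ j, if G.Adj i j then x i * x j else 0 := by
    simp only [Finset.mul_sum]
    refine Finset.sum_congr rfl fun i _ => Finset.sum_congr rfl fun j _ => ?_
    split_ifs <;> ring
  rw [div_le_iff₀ hS, hnum, hG.dirichletEnergy_eq, inv_mul_le_iff₀ (by positivity)]
  constructor <;> intro h <;> linarith

theorem IsRegularOfDegree.normSecondEig_le_iff (hG : G.IsRegularOfDegree d) (hd : d ≠ 0)
    {μ : ℝ} (hμ : 0 ≤ μ) :
    normSecondEig d G ≤ μ ↔
      ∀ x : V → ℝ, ∑ i, x i = 0 → 2 * d * (1 - μ) * ∑ i, x i ^ 2 ≤ G.dirichletEnergy x := by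
  rw [normSecondEig, if_neg hd]
  constructor
  · intro h x hx
    by_cases hx0 : x = 0
    · simp [hx0, dirichletEnergy]
    have hbdd : BddAbove {r : ℝ | ∃ x : V → ℝ, x ≠ 0 ∧ ∑ i, x i = 0 ∧
        r = (∑ i, ∑ j, (if G.Adj i j then (d : ℝ)⁻¹ else 0) * x i * x j) / ∑ i, x i ^ 2} := by
      refine ⟨1, ?_⟩
      rintro r ⟨y, hy0, -, rfl⟩
      exact (hG.rayleighQuotient_le_iff hd hy0 1).2 (by simpa using G.dirichletEnergy_nonneg y)
    exact (hG.rayleighQuotient_le_iff hd hx0 μ).1 (le_trans (le_csSup hbdd ⟨x, hx0, hx, rfl⟩) h)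
  · intro h
    refine Real.sSup_le ?_ hμ
    rintro r ⟨x, hx0, hx, rfl⟩
    exact (hG.rayleighQuotient_le_iff hd hx0 μ).2 (h x hx)

end Regular

section OrderedEdge

abbrev OrderedEdge {V : Type*} [LinearOrder V] (G : SimpleGraph V) : Type _ :=
  {p : V × V // p.1 < p.2 ∧ G.Adj p.1 p.2}

variable {V : Type*} [Fintype V] [LinearOrder V] {G : SimpleGraph V}

theorem sum_sum_adj_eq_sum_orderedEdge {M : Type*} [AddCommMonoid M] (f : V → V → M) :
    ∑ i, ∑ j, (if G.Adj i j then f i j else 0)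
      = ∑ e : G.OrderedEdge, (f e.1.1 e.1.2 + f e.1.2 e.1.1) := by
  have hsplit : ∀ i j, (if G.Adj i j then f i j else 0)
      = (if i < j ∧ G.Adj i j then f i j else 0) + (if j < i ∧ G.Adj j i then f i j else 0) := by
    intro i j
    by_cases h : G.Adj i j
    · rcases h.ne.lt_or_gt with hij | hij <;> simp [h, h.symm, hij, hij.not_gt]
    · simp [h, G.adj_comm j i]
  simp only [hsplit, Finset.sum_add_distrib]
  rw [Finset.sum_comm (f := fun i j => if j < i ∧ G.Adj j i then f i j else 0),
    ← Finset.sum_add_distrib]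
  simp only [← Finset.sum_add_distrib, ← ite_add_zero, ← Fintype.sum_prod_type']
  rw [← Finset.sum_filter]
  exact Finset.sum_subtype _ (by simp) (fun p : V × V => f p.1 p.2 + f p.2 p.1)

theorem IsRegularOfDegree.sum_orderedEdge_add {M : Type*} [AddCommMonoid M] {d : ℕ}
    (hG : G.IsRegularOfDegree d) (g : V → M) :
    ∑ e : G.OrderedEdge, (g e.1.1 + g e.1.2) = d • ∑ i, g i := by
  calc ∑ e : G.OrderedEdge, (g e.1.1 + g e.1.2)
      = ∑ i, ∑ j, (if G.Adj i j then g i else 0) :=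
        (sum_sum_adj_eq_sum_orderedEdge fun i _ => g i).symm
    _ = d • ∑ i, g i := by simp only [hG.sum_adj_const, Finset.smul_sum]

theorem dirichletEnergy_eq_sum_orderedEdge (x : V → ℝ) :
    G.dirichletEnergy x = 2 * ∑ e : G.OrderedEdge, (x e.1.1 - x e.1.2) ^ 2 := by
  rw [dirichletEnergy, sum_sum_adj_eq_sum_orderedEdge, Finset.mul_sum]
  exact Finset.sum_congr rfl fun e _ => by ring

end OrderedEdge

end SimpleGraph

open SimpleGraph

def k33Minus : SimpleGraph (Fin 6) :=
  SimpleGraph.fromRel fun i j => i.val < 3 ∧ 3 ≤ j.val ∧ ¬(i.val = 0 ∧ j.val = 3)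

instance : DecidableRel k33Minus.Adj := fun _ _ => inferInstanceAs (Decidable (_ ∧ _))

theorem k33Minus_dirichletEnergy (w : Fin 6 → ℝ) :
    k33Minus.dirichletEnergy w = 2 * ((w 0 - w 4) ^ 2 + (w 0 - w 5) ^ 2 + (w 1 - w 3) ^ 2
      + (w 1 - w 4) ^ 2 + (w 1 - w 5) ^ 2 + (w 2 - w 3) ^ 2 + (w 2 - w 4) ^ 2
      + (w 2 - w 5) ^ 2) := by
  simp +decide only [dirichletEnergy, Fin.sum_univ_six, ↓reduceIte, add_zero, zero_add]
  ring

theorem k33Minus_degree_add (j : Fin 6) :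
    (if j = 0 then 1 else 0) + (if j = 3 then 1 else 0)
      + ∑ k, (if k33Minus.Adj j k then 1 else 0) = 3 := by
  revert j
  decide

noncomputable def gadgetEnergy (a b : ℝ) (w : Fin 6 → ℝ) : ℝ :=
  (a - w 0) ^ 2 + (b - w 3) ^ 2 + k33Minus.dirichletEnergy w / 2

theorem gadgetEnergy_nonneg (a b : ℝ) (w : Fin 6 → ℝ) : 0 ≤ gadgetEnergy a b w := by
  have := k33Minus.dirichletEnergy_nonneg w
  unfold gadgetEnergy
  positivity

theorem sq_sub_le_gadgetEnergy (a b : ℝ) (w : Fin 6 → ℝ) :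
    (a - b) ^ 2 ≤ 5 * gadgetEnergy a b w := by
  have h := sq_sub_le_mul_sum_sq_sub ![a, w 0, w 4, w 1, w 3, b]
  simp only [Nat.succ_eq_add_one, Nat.reduceAdd, Fin.isValue, Fin.reduceLast, Matrix.cons_val,
    Matrix.cons_val_zero, zero_add, Nat.cast_ofNat, Matrix.cons_val_succ, Fin.sum_univ_five,
    Fin.castSucc_zero, Matrix.cons_val_one, Fin.castSucc_one, Fin.reduceCastSucc] at h
  rw [gadgetEnergy, k33Minus_dirichletEnergy]
  linarith [sq_nonneg (w 0 - w 5), sq_nonneg (w 1 - w 5), sq_nonneg (w 2 - w 3),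
    sq_nonneg (w 2 - w 4), sq_nonneg (w 2 - w 5)]

theorem sum_sq_sub_le_gadgetEnergy (a b m : ℝ) (w : Fin 6 → ℝ) :
    ∑ k, (w k - m) ^ 2 ≤ 28 * gadgetEnergy a b w + 6 * ((a - m) ^ 2 + (b - m) ^ 2) := by
  have hsplit : ∀ c z : ℝ, (z - m) ^ 2 ≤ 2 * ((c - m) ^ 2 + (z - c) ^ 2) := fun c z => by
    simpa only [Nat.succ_eq_add_one, Nat.reduceAdd, Fin.reduceLast, Matrix.cons_val, Fin.isValue,
      Matrix.cons_val_zero, zero_add, Nat.cast_ofNat, Matrix.cons_val_succ, Fin.sum_univ_two,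
      Fin.castSucc_zero, Matrix.cons_val_one, Matrix.cons_val_fin_one, Fin.castSucc_one]
      using sq_sub_le_mul_sum_sq_sub ![m, c, z]
  have h1 := sq_sub_le_mul_sum_sq_sub ![a, w 0, w 4, w 1]
  have h2 := sq_sub_le_mul_sum_sq_sub ![a, w 0, w 4, w 2]
  have h4 := sq_sub_le_mul_sum_sq_sub ![b, w 3, w 1, w 4]
  have h5 := sq_sub_le_mul_sum_sq_sub ![b, w 3, w 1, w 5]
  simp only [Nat.succ_eq_add_one, Nat.reduceAdd, Fin.isValue, Fin.reduceLast, Matrix.cons_val,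
    Matrix.cons_val_zero, zero_add, Nat.cast_ofNat, Matrix.cons_val_succ, Fin.sum_univ_three,
    Fin.castSucc_zero, Matrix.cons_val_one, Fin.castSucc_one, Fin.reduceCastSucc] at h1 h2 h4 h5
  rw [Fin.sum_univ_six, gadgetEnergy, k33Minus_dirichletEnergy]
  linarith [hsplit a (w 0), hsplit a (w 1), hsplit a (w 2), hsplit b (w 3), hsplit b (w 4),
    hsplit b (w 5), sq_nonneg (w 0 - w 4), sq_nonneg (w 0 - w 5), sq_nonneg (w 1 - w 3),
    sq_nonneg (w 1 - w 4), sq_nonneg (w 1 - w 5), sq_nonneg (w 2 - w 3), sq_nonneg (w 2 - w 4),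
    sq_nonneg (w 2 - w 5), sq_nonneg (a - w 0), sq_nonneg (b - w 3)]

section Gadget

variable {N : ℕ} {H : SimpleGraph (Fin N)}

theorem gadgetGraph_adj_inl_inl (v w : Fin N) :
    ¬ (gadgetGraph H).Adj (.inl v) (.inl w) := by
  simp [gadgetGraph]

theorem gadgetGraph_adj_inl_inr (v : Fin N) (e : H.OrderedEdge) (k : Fin 6) :
    (gadgetGraph H).Adj (.inl v) (.inr (e, k)) ↔ (e.1.1 = v ∧ k = 0) ∨ (e.1.2 = v ∧ k = 3) := by
  simp [gadgetGraph]

theorem gadgetGraph_adj_inr_inl (v : Fin N) (e : H.OrderedEdge) (k : Fin 6) :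
    (gadgetGraph H).Adj (.inr (e, k)) (.inl v) ↔ (e.1.1 = v ∧ k = 0) ∨ (e.1.2 = v ∧ k = 3) := by
  rw [adj_comm, gadgetGraph_adj_inl_inr]

theorem gadgetGraph_adj_inr_inr (e e' : H.OrderedEdge) (j k : Fin 6) :
    (gadgetGraph H).Adj (.inr (e, j)) (.inr (e', k)) ↔ e = e' ∧ k33Minus.Adj j k := by
  simp only [gadgetGraph, k33Minus, fromRel_adj, ne_eq, Sum.inr.injEq, Prod.mk.injEq]
  constructor
  · rintro ⟨hne, ⟨rfl, h⟩ | ⟨rfl, h⟩⟩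
    · exact ⟨rfl, fun hjk => hne ⟨rfl, hjk⟩, .inl h⟩
    · exact ⟨rfl, fun hjk => hne ⟨rfl, hjk⟩, .inr h⟩
  · rintro ⟨rfl, hjk, h | h⟩
    · exact ⟨fun h' => hjk h'.2, .inl ⟨rfl, h⟩⟩
    · exact ⟨fun h' => hjk h'.2, .inr ⟨rfl, h⟩⟩

theorem gadgetGraph_sum_adj_inl {M : Type*} [AddCommMonoid M] (v : Fin N)
    (g : GadgetVertex H → M) :
    ∑ b, (if (gadgetGraph H).Adj (.inl v) b then g b else 0)
      = ∑ e : H.OrderedEdge, ((if e.1.1 = v then g (.inr (e, 0)) else 0)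
          + (if e.1.2 = v then g (.inr (e, 3)) else 0)) := by
  simp [Fintype.sum_sum_type, Fintype.sum_prod_type, gadgetGraph_adj_inl_inl,
    gadgetGraph_adj_inl_inr, Fin.sum_univ_six]

theorem gadgetGraph_sum_adj_inr {M : Type*} [AddCommMonoid M] (e : H.OrderedEdge) (j : Fin 6)
    (g : GadgetVertex H → M) :
    ∑ b, (if (gadgetGraph H).Adj (.inr (e, j)) b then g b else 0)
      = (if j = 0 then g (.inl e.1.1) else 0) + (if j = 3 then g (.inl e.1.2) else 0)
        + ∑ k, (if k33Minus.Adj j k then g (.inr (e, k)) else 0) := by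
  simp only [Fintype.sum_sum_type, Fintype.sum_prod_type, gadgetGraph_adj_inr_inl,
    gadgetGraph_adj_inr_inr, ite_and]
  congr 1
  · by_cases h0 : j = 0
    · simp [h0]
    · by_cases h3 : j = 3 <;> simp [h0, h3]
  · simp [Finset.sum_ite_irrel]

theorem gadgetGraph_isRegularOfDegree (hH : H.IsRegularOfDegree 3) :
    (gadgetGraph H).IsRegularOfDegree 3 := by
  rintro (v | ⟨e, j⟩)
  · rw [degree_eq_sum_ite, gadgetGraph_sum_adj_inl,
      hH.sum_orderedEdge_add fun w => if w = v then 1 else 0]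
    simp
  · rw [degree_eq_sum_ite, gadgetGraph_sum_adj_inr, k33Minus_degree_add]

theorem dirichletEnergy_gadgetGraph (x : GadgetVertex H → ℝ) :
    (gadgetGraph H).dirichletEnergy x = 2 * ∑ e : H.OrderedEdge,
      gadgetEnergy (x (.inl e.1.1)) (x (.inl e.1.2)) (fun k => x (.inr (e, k))) := by
  rw [dirichletEnergy, Fintype.sum_sum_type, Fintype.sum_prod_type]
  simp only [gadgetGraph_sum_adj_inl, gadgetGraph_sum_adj_inr]
  rw [Finset.sum_comm]
  simp only [Finset.sum_add_distrib, Finset.sum_ite_eq', Finset.sum_ite_eq, Finset.mem_univ,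
    if_true, gadgetEnergy, dirichletEnergy]
  simp only [sub_sq_comm (x (.inr _)) (x (.inl _)), ← Finset.sum_div]
  ring

theorem gadgetGraph_poincare (hH : H.IsRegularOfDegree 3) {c : ℝ} (hc : 0 ≤ c)
    (hgap : ∀ y : Fin N → ℝ, ∑ i, y i = 0 → c * ∑ i, y i ^ 2 ≤ H.dirichletEnergy y)
    {x : GadgetVertex H → ℝ} (hx : ∑ i, x i = 0) :
    c * ∑ i, x i ^ 2 ≤ (95 + 14 * c) * (gadgetGraph H).dirichletEnergy x := by
  set a : Fin N → ℝ := fun v => x (.inl v)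
  set m := (∑ v, a v) / Fintype.card (Fin N)
  set E : H.OrderedEdge → ℝ := fun e => gadgetEnergy (a e.1.1) (a e.1.2) (fun k => x (.inr (e, k)))
  set T := ∑ v, (a v - m) ^ 2
  have hE : 0 ≤ ∑ e, E e := Finset.sum_nonneg fun e _ => gadgetEnergy_nonneg _ _ _
  have hcenter : ∑ i, x i ^ 2 ≤ T + ∑ e : H.OrderedEdge, ∑ k, (x (.inr (e, k)) - m) ^ 2 := by
    simpa only [Fintype.sum_sum_type, Fintype.sum_prod_type] using sum_sq_le_sum_sub_sq hx m
  have hgadgets : ∑ e : H.OrderedEdge, ∑ k, (x (.inr (e, k)) - m) ^ 2 ≤ 28 * ∑ e, E e + 18 * T :=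
    calc _ ≤ ∑ e : H.OrderedEdge, (28 * E e + 6 * ((a e.1.1 - m) ^ 2 + (a e.1.2 - m) ^ 2)) :=
          Finset.sum_le_sum fun e _ => sum_sq_sub_le_gadgetEnergy _ _ _ _
      _ = 28 * ∑ e, E e + 18 * T := by
          rw [Finset.sum_add_distrib, ← Finset.mul_sum, ← Finset.mul_sum,
            hH.sum_orderedEdge_add fun v => (a v - m) ^ 2, nsmul_eq_mul]
          ring
  have hbase : c * T ≤ 10 * ∑ e, E e :=
    calc c * T ≤ H.dirichletEnergy fun v => a v - m := hgap _ (sum_sub_mean_eq_zero a)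
      _ = 2 * ∑ e : H.OrderedEdge, (a e.1.1 - a e.1.2) ^ 2 := by
          rw [dirichletEnergy_sub_const, dirichletEnergy_eq_sum_orderedEdge]
      _ ≤ 2 * ∑ e, 5 * E e := by
          gcongr with e
          exact sq_sub_le_gadgetEnergy _ _ _
      _ = 10 * ∑ e, E e := by rw [← Finset.mul_sum]; ring
  calc c * ∑ i, x i ^ 2 ≤ c * (19 * T + 28 * ∑ e, E e) := by gcongr; linarith
    _ ≤ (95 + 14 * c) * (2 * ∑ e, E e) := by linarith
    _ = (95 + 14 * c) * (gadgetGraph H).dirichletEnergy x := by rw [dirichletEnergy_gadgetGraph]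

end Gadget

/-- If `H` is a 3-regular graph with normalized second eigenvalue at most
`2√2/3`, then the gadget-replacement graph `G` of `H` has normalized second eigenvalue
at most `1 - 10⁻⁴`. -/
theorem gadgetGraph_secondEig_le {N : ℕ} (H : SimpleGraph (Fin N))
    (hreg : H.IsRegularOfDegree 3)
    (hH : normSecondEig 3 H ≤ 2 * Real.sqrt 2 / 3) :
    normSecondEig 3 (gadgetGraph H) ≤ 1 - (10 : ℝ)⁻¹ ^ 4 := by
  have hsqrt : 2 * Real.sqrt 2 / 3 ≤ 19 / 20 := by
    nlinarith [Real.sq_sqrt (show (0 : ℝ) ≤ 2 by norm_num), Real.sqrt_nonneg 2]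
  have hgapH := (hreg.normSecondEig_le_iff three_ne_zero (by positivity)).1 hH
  have hgap : ∀ y : Fin N → ℝ, ∑ i, y i = 0 → 3 / 10 * ∑ i, y i ^ 2 ≤ H.dirichletEnergy y :=
    fun y hy => le_trans (mul_le_mul_of_nonneg_right (by push_cast; linarith)
      (Finset.sum_nonneg fun i _ => sq_nonneg (y i))) (hgapH y hy)
  refine ((gadgetGraph_isRegularOfDegree hreg).normSecondEig_le_iff three_ne_zero
    (by norm_num)).2 fun x hx => ?_
  have hpoincare := gadgetGraph_poincare hreg (by norm_num) hgap hx
  have hE := (gadgetGraph H).dirichletEnergy_nonneg x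
  norm_num at hpoincare ⊢
  linarith
end

section
/- Let q ≥ 3, let d ≥ 1, and let G be a d-regular bipartite graph on 2(q−1)n vertices whose two parts each have (q−1)n vertices. Let X be the proper q-coloring that colors every vertex of the first part with color 1 and colors the second part with colors 2,...,q so that each of the colors 2,...,q is used on exactly n vertices; let Y be the proper q-coloring that colors every vertex of the second part with color q and colors the first part with colors 1,...,q−1 so that each of these colors is used on exactly n vertices. Then d(X,Y) = 2(q−2)n = (1 − 1/(q−1))·|V(G)|. -/
open scoped Classical

lemma card_filter_sum {α β : Type*} [Fintype α] [Fintype β] (p : α ⊕ β → Prop) [DecidablePred p] :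
    (Finset.univ.filter p).card =
      (Finset.univ.filter fun a => p (Sum.inl a)).card +
      (Finset.univ.filter fun b => p (Sum.inr b)).card := by
  rw [← Finset.card_toLeft_add_card_toRight]
  congr 1 <;> [skip; skip] <;> congr 1 <;> ext x <;> simp


/-- Let `G` be a `d`-regular bipartite graph on `2(q-1)n` vertices with
parts of size `(q-1)n` each.  If `X` colors the whole first part with color `1`
(here `⟨0, _⟩ : Fin q`) and the second part with each of the remaining `q - 1` colors
on exactly `n` vertices, and `Y` colors the whole second part with color `q`
(here `⟨q-1, _⟩ : Fin q`) and the first part with each of the remaining `q - 1` colors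
on exactly `n` vertices, then `d(X, Y) = 2(q-2)n = (1 - 1/(q-1))·|V(G)|`. -/
theorem bipartite_two_colorings_dist (q n d : ℕ) (hq : 3 ≤ q) (hd : 1 ≤ d)
    (G : SimpleGraph (Fin ((q - 1) * n) ⊕ Fin ((q - 1) * n)))
    (hbip : ∀ u v, G.Adj u v → u.isLeft ≠ v.isLeft)
    (hreg : G.IsRegularOfDegree d)
    (X Y : (Fin ((q - 1) * n) ⊕ Fin ((q - 1) * n)) → Fin q)
    (hX1 : ∀ a, X (Sum.inl a) = ⟨0, by omega⟩)
    (hX2 : ∀ c : Fin q, c ≠ ⟨0, by omega⟩ →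
      (Finset.univ.filter fun b => X (Sum.inr b) = c).card = n)
    (hY1 : ∀ b, Y (Sum.inr b) = ⟨q - 1, by omega⟩)
    (hY2 : ∀ c : Fin q, c ≠ ⟨q - 1, by omega⟩ →
      (Finset.univ.filter fun a => Y (Sum.inl a) = c).card = n)
    (hXp : IsProperColoring G X) (hYp : IsProperColoring G Y) :
    colDist X Y = 2 * (q - 2) * n ∧
    ((2 * (q - 2) * n : ℕ) : ℝ) =
      (1 - 1 / ((q : ℝ) - 1)) *
        (Fintype.card (Fin ((q - 1) * n) ⊕ Fin ((q - 1) * n)) : ℝ) := by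
  have hq0 : 0 < q := by omega
  have hq1 : q - 1 < q := by omega
  set c0 : Fin q := ⟨0, hq0⟩ with hc0
  set cq : Fin q := ⟨q - 1, hq1⟩ with hcq
  -- each color other than cq used n times on left, color cq used 0 times on left
  have hcardL : Fintype.card (Fin ((q-1)*n)) = (q-1)*n := by simp
  have hsumY : ∑ c : Fin q, (Finset.univ.filter fun a => Y (Sum.inl a) = c).card = (q-1)*n := by
    rw [← Finset.card_eq_sum_card_fiberwise (f := fun a => Y (Sum.inl a))
      (fun x _ => Finset.mem_univ _)]
    simp
  have hYq : (Finset.univ.filter fun a => Y (Sum.inl a) = cq).card = 0 := by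
    have := Finset.sum_erase_add Finset.univ
      (fun c => (Finset.univ.filter fun a => Y (Sum.inl a) = c).card) (Finset.mem_univ cq)
    rw [hsumY] at this
    beta_reduce at this
    have herase : ∑ c ∈ Finset.univ.erase cq,
        (Finset.univ.filter fun a => Y (Sum.inl a) = c).card = (q-1)*n := by
      rw [Finset.sum_congr rfl (fun c hc => hY2 c (Finset.ne_of_mem_erase hc)),
        Finset.sum_const, Finset.card_erase_of_mem (Finset.mem_univ _),
        Finset.card_univ, Fintype.card_fin, smul_eq_mul]
    omega
  have hsumX : ∑ c : Fin q, (Finset.univ.filter fun b => X (Sum.inr b) = c).card = (q-1)*n := by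
    rw [← Finset.card_eq_sum_card_fiberwise (f := fun b => X (Sum.inr b))
      (fun x _ => Finset.mem_univ _)]
    simp
  have hX0 : (Finset.univ.filter fun b => X (Sum.inr b) = c0).card = 0 := by
    have := Finset.sum_erase_add Finset.univ
      (fun c => (Finset.univ.filter fun b => X (Sum.inr b) = c).card) (Finset.mem_univ c0)
    rw [hsumX] at this
    beta_reduce at this
    have herase : ∑ c ∈ Finset.univ.erase c0,
        (Finset.univ.filter fun b => X (Sum.inr b) = c).card = (q-1)*n := by
      rw [Finset.sum_congr rfl (fun c hc => hX2 c (Finset.ne_of_mem_erase hc)),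
        Finset.sum_const, Finset.card_erase_of_mem (Finset.mem_univ _),
        Finset.card_univ, Fintype.card_fin, smul_eq_mul]
    omega
  -- per-permutation computation
  have hcomp : ∀ σ : Equiv.Perm (Fin q), hammingDist X (σ ∘ Y) =
      if σ cq = c0 then 2*(q-1)*n else 2*(q-2)*n := by
    intro σ
    have hsplit : hammingDist X (σ ∘ Y) =
        (Finset.univ.filter fun a => X (Sum.inl a) ≠ σ (Y (Sum.inl a))).card +
        (Finset.univ.filter fun b => X (Sum.inr b) ≠ σ (Y (Sum.inr b))).card := by
      rw [hammingDist]
      exact card_filter_sum _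
    -- left part
    have hLeq : ∀ a, (X (Sum.inl a) ≠ σ (Y (Sum.inl a))) ↔ ¬ (Y (Sum.inl a) = σ⁻¹ c0) := by
      intro a
      rw [hX1 a]
      constructor
      · intro h h'
        exact h (by rw [h']; simp)
      · intro h h'
        exact h (by rw [h']; simp)
    have hL : (Finset.univ.filter fun a => X (Sum.inl a) ≠ σ (Y (Sum.inl a))).card =
        (q-1)*n - (Finset.univ.filter fun a => Y (Sum.inl a) = σ⁻¹ c0).card := by
      rw [Finset.filter_congr (fun a _ => by rw [hLeq a])]
      have := Finset.card_filter_add_card_filter_not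
        (s := Finset.univ) (p := fun a => Y (Sum.inl a) = σ⁻¹ c0)
      simp only [Finset.card_univ, hcardL] at this
      omega
    -- right part
    have hReq : ∀ b, (X (Sum.inr b) ≠ σ (Y (Sum.inr b))) ↔ ¬ (X (Sum.inr b) = σ cq) := by
      intro b; rw [hY1 b]
    have hR : (Finset.univ.filter fun b => X (Sum.inr b) ≠ σ (Y (Sum.inr b))).card =
        (q-1)*n - (Finset.univ.filter fun b => X (Sum.inr b) = σ cq).card := by
      rw [Finset.filter_congr (fun b _ => by rw [hReq b])]
      have := Finset.card_filter_add_card_filter_not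
        (s := Finset.univ) (p := fun b => X (Sum.inr b) = σ cq)
      simp only [Finset.card_univ, hcardL] at this
      omega
    have hqn : (q-1)*n = (q-2)*n + n := by
      have : q - 1 = (q-2) + 1 := by omega
      rw [this, Nat.succ_mul]
    by_cases h : σ cq = c0
    · have hinv : σ⁻¹ c0 = cq := by rw [← h]; simp
      rw [hsplit, hL, hR, hinv, hYq, h, hX0, if_pos rfl]
      simp only [Nat.sub_zero]
      have : q - 1 = q - 2 + 1 := by omega
      ring
    · have hinv : σ⁻¹ c0 ≠ cq := fun h' => h (by rw [← h']; simp)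
      rw [hsplit, hL, hR, hY2 _ hinv, hX2 _ h, if_neg h, hqn]
      simp only [Nat.add_sub_cancel]
      ring
  constructor
  · apply le_antisymm
    · have h1 : hammingDist X ((1 : Equiv.Perm (Fin q)) ∘ Y) = 2*(q-2)*n := by
        rw [hcomp 1, if_neg]
        intro h
        rw [hc0, hcq] at h
        simp only [Equiv.Perm.coe_one, id_eq, Fin.mk.injEq] at h
        omega
      calc colDist X Y ≤ hammingDist X ((1 : Equiv.Perm (Fin q)) ∘ Y) :=
            ciInf_le (OrderBot.bddBelow _) 1
        _ = 2*(q-2)*n := h1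
    · apply le_ciInf
      intro σ
      rw [hcomp σ]
      split
      · calc 2*(q-2)*n ≤ 2*(q-1)*n := Nat.mul_le_mul (by omega) le_rfl
          _ = 2*(q-1)*n := rfl
      · exact le_rfl
  · have hc2 : Fintype.card (Fin ((q - 1) * n) ⊕ Fin ((q - 1) * n)) = 2*((q-1)*n) := by
      simp [Fintype.card_sum]; ring
    rw [hc2]
    push_cast [Nat.cast_sub (show 1 ≤ q by omega), Nat.cast_sub (show 2 ≤ q by omega)]
    have hne : (q:ℝ) - 1 ≠ 0 := by
      have : (3:ℝ) ≤ q := by exact_mod_cast hq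
      nlinarith
    field_simp
    ring
end
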